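/- arXiv:2401.11948 — 5 statements merged into one kernel-verified Lean document; each statement's English description precedes it below -/
import Mathlib

section
/- Subspace property of DEKI (Lemma 3.1): Let S denote the linear subspace of ℝ^d spanned by the initial ensemble z_0^{(1)},…,z_0^{(J)}. Then for every time t ∈ ℕ and every index j ∈ {1,…,J}, the DEKI iterate satisfies z_t^{(j)} ∈ S. -/
open Matrix BigOperators

noncomputable section

/-- Sample mean of an ensemble. -/
def ensMean {d : ℕ} (J : ℕ) (z : Fin J → Fin d → ℝ) : Fin d → ℝ :=
  (J : ℝ)⁻¹ • ∑ j, z j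

/-- Ensemble spread `e^{(j)} = z^{(j)} - z̄`. -/
def ensSpread {d : ℕ} (J : ℕ) (z : Fin J → Fin d → ℝ) (j : Fin J) : Fin d → ℝ :=
  z j - ensMean J z

/-- Sample covariance `C = (1/J) ∑_j e^{(j)} (e^{(j)})ᵀ`. -/
def ensCov {d : ℕ} (J : ℕ) (z : Fin J → Fin d → ℝ) : Matrix (Fin d) (Fin d) ℝ :=
  (J : ℝ)⁻¹ • ∑ j, vecMulVec (ensSpread J z j) (ensSpread J z j)

lemma vecMulVec_mulVec' {d : ℕ} (a b v : Fin d → ℝ) :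
    vecMulVec a b *ᵥ v = (b ⬝ᵥ v) • a := by
  ext i
  simp [vecMulVec, mulVec, dotProduct, Finset.mul_sum, mul_assoc, mul_comm, mul_left_comm]

lemma sum_mulVec' {d J : ℕ} (A : Fin J → Matrix (Fin d) (Fin d) ℝ) (v : Fin d → ℝ) :
    (∑ j, A j) *ᵥ v = ∑ j, A j *ᵥ v := by
  ext i
  simp [mulVec, dotProduct, Matrix.sum_apply, Finset.sum_mul]
  rw [Finset.sum_comm]

/-- Subspace property of DEKI (Lemma 3.1): every iterate `z_t^{(j)}` of the DEKI
update stays in the linear span of the initial ensemble `z_0^{(1)}, …, z_0^{(J)}`. -/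
theorem deki_subspace_property
    {d p J : ℕ} (hd : 0 < d) (hp : 0 < p) (hJ : 0 < J)
    (α h : ℝ) (hα : 0 < α) (hh : 0 < h)
    (S : ℕ → Matrix (Fin p) (Fin d) ℝ) (u : ℕ → Fin p → ℝ)
    (z : ℕ → Fin J → Fin d → ℝ)
    (hupd : ∀ t j, z (t+1) j = z t j -
      h • ((ensCov J (z t)) *ᵥ ((S (t+1))ᵀ *ᵥ ((S (t+1)) *ᵥ (z t j) - u (t+1)) + α • z t j))) :
    ∀ (t : ℕ) (j : Fin J), z t j ∈ Submodule.span ℝ (Set.range (z 0)) := by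
  set V := Submodule.span ℝ (Set.range (z 0)) with hV
  intro t
  induction t with
  | zero => intro j; exact Submodule.subset_span ⟨j, rfl⟩
  | succ t ih =>
    intro j
    rw [hupd t j]
    have hspread : ∀ k, ensSpread J (z t) k ∈ V := by
      intro k
      refine Submodule.sub_mem V (ih k) ?_
      exact Submodule.smul_mem V _ (Submodule.sum_mem V fun i _ => ih i)
    refine Submodule.sub_mem V (ih j) (Submodule.smul_mem V _ ?_)
    rw [ensCov, smul_mulVec, sum_mulVec']
    refine Submodule.smul_mem V _ (Submodule.sum_mem V fun k _ => ?_)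
    rw [vecMulVec_mulVec']
    exact Submodule.smul_mem V _ (hspread k)
end
end

section
/- Covariance recursion for DEKI: for every t ∈ ℕ, the sample covariance of the DEKI ensemble satisfies the exact identity C_{t+1} = C_t − 2h·C_t·A_{t+1}^{(α)}·C_t + h²·C_t·A_{t+1}^{(α)}·C_t·A_{t+1}^{(α)}·C_t. -/
open Matrix BigOperators

noncomputable section

/-!
The DEKI step is the same affine map `z ↦ (1 - h C_t A) z + c` for every ensemble member, so the
spreads are mapped linearly by `B = 1 - h C_t A` and `C_{t+1} = B C_t Bᵀ`; expanding this product
with `C_tᵀ = C_t` and `Aᵀ = A` gives the recursion.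
-/

lemma ensSpread_of_affine {d J : ℕ} {z z' : Fin J → Fin d → ℝ} (B : Matrix (Fin d) (Fin d) ℝ)
    (c : Fin d → ℝ) (hz : ∀ j, z' j = B *ᵥ z j + c) (j : Fin J) :
    ensSpread J z' j = B *ᵥ ensSpread J z j := by
  have hJ : (J : ℝ) ≠ 0 := Nat.cast_ne_zero.mpr j.pos.ne'
  have hmean : ensMean J z' = B *ᵥ ensMean J z + c := by
    simp only [ensMean, hz, Finset.sum_add_distrib, ← mulVec_sum, Finset.sum_const,
      Finset.card_univ, Fintype.card_fin, mulVec_smul, smul_add, ← Nat.cast_smul_eq_nsmul ℝ,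
      smul_smul, inv_mul_cancel₀ hJ, one_smul]
  rw [ensSpread, ensSpread, hz, hmean, mulVec_sub]
  abel

lemma ensCov_of_affine {d J : ℕ} {z z' : Fin J → Fin d → ℝ} (B : Matrix (Fin d) (Fin d) ℝ)
    (c : Fin d → ℝ) (hz : ∀ j, z' j = B *ᵥ z j + c) :
    ensCov J z' = B * ensCov J z * Bᵀ := by
  simp only [ensCov, ensSpread_of_affine B c hz, Matrix.mul_smul, Matrix.smul_mul,
    Finset.mul_sum, Finset.sum_mul, mul_vecMulVec, vecMulVec_mul, vecMul_transpose]

lemma ensCov_isSymm {d J : ℕ} (z : Fin J → Fin d → ℝ) : (ensCov J z).IsSymm := by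
  simp only [IsSymm, ensCov, transpose_smul, transpose_sum, transpose_vecMulVec]

lemma preconditioned_tikhonov_step_eq_affine {m n : Type*} [Fintype m] [Fintype n]
    [DecidableEq n] (C : Matrix n n ℝ) (S : Matrix m n ℝ) (u : m → ℝ) (α h : ℝ) (x : n → ℝ) :
    x - h • (C *ᵥ (Sᵀ *ᵥ (S *ᵥ x - u) + α • x)) =
      (1 - h • (C * (Sᵀ * S + α • 1))) *ᵥ x + h • (C *ᵥ (Sᵀ *ᵥ u)) := by
  simp only [sub_mulVec, one_mulVec, smul_mulVec, ← mulVec_mulVec, mulVec_add, add_mulVec,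
    mulVec_sub, mulVec_smul]
  module

lemma one_sub_smul_mul_mul_transpose {n R : Type*} [Fintype n] [DecidableEq n] [CommRing R]
    {A C : Matrix n n R} (hA : A.IsSymm) (hC : C.IsSymm) (h : R) :
    (1 - h • (C * A)) * C * (1 - h • (C * A))ᵀ =
      C - (2 * h) • (C * A * C) + h ^ 2 • (C * A * C * A * C) := by
  rw [transpose_sub, transpose_one, transpose_smul, transpose_mul, hA.eq, hC.eq]
  simp only [Matrix.mul_sub, Matrix.sub_mul, Matrix.mul_one, Matrix.one_mul,
    Matrix.mul_smul, Matrix.smul_mul, Matrix.mul_assoc]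
  module

theorem deki_covariance_recursion_general
    {d p J : ℕ}
    (α h : ℝ)
    (S : ℕ → Matrix (Fin p) (Fin d) ℝ) (u : ℕ → Fin p → ℝ)
    (z : ℕ → Fin J → Fin d → ℝ)
    (hupd : ∀ t j, z (t+1) j = z t j -
      h • ((ensCov J (z t)) *ᵥ ((S (t+1))ᵀ *ᵥ ((S (t+1)) *ᵥ (z t j) - u (t+1)) + α • z t j)))
    (Aα : ℕ → Matrix (Fin d) (Fin d) ℝ)
    (hAα : ∀ t, Aα t = (S t)ᵀ * (S t) + α • (1 : Matrix (Fin d) (Fin d) ℝ)) :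
    ∀ t : ℕ, ensCov J (z (t+1)) =
      ensCov J (z t)
      - (2*h) • (ensCov J (z t) * Aα (t+1) * ensCov J (z t))
      + h^2 • (ensCov J (z t) * Aα (t+1) * ensCov J (z t) * Aα (t+1) * ensCov J (z t)) := by
  intro t
  have hA : (Aα (t+1)).IsSymm := by
    rw [hAα, IsSymm, transpose_add, transpose_mul, transpose_transpose, transpose_smul,
      transpose_one]
  have hstep : ∀ j, z (t+1) j = (1 - h • (ensCov J (z t) * Aα (t+1))) *ᵥ z t j
      + h • (ensCov J (z t) *ᵥ ((S (t+1))ᵀ *ᵥ u (t+1))) := fun j => by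
    rw [hupd, hAα, preconditioned_tikhonov_step_eq_affine]
  rw [ensCov_of_affine _ _ hstep, one_sub_smul_mul_mul_transpose hA (ensCov_isSymm _)]

/-- Covariance recursion for DEKI: the sample covariance satisfies the exact identity
`C_{t+1} = C_t − 2h·C_t·A_{t+1}^{(α)}·C_t + h²·C_t·A_{t+1}^{(α)}·C_t·A_{t+1}^{(α)}·C_t`. -/
theorem deki_covariance_recursion
    {d p J : ℕ} (hd : 0 < d) (hp : 0 < p) (hJ : 0 < J)
    (α h : ℝ) (hα : 0 < α) (hh : 0 < h)
    (S : ℕ → Matrix (Fin p) (Fin d) ℝ) (u : ℕ → Fin p → ℝ)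
    (z : ℕ → Fin J → Fin d → ℝ)
    (hupd : ∀ t j, z (t+1) j = z t j -
      h • ((ensCov J (z t)) *ᵥ ((S (t+1))ᵀ *ᵥ ((S (t+1)) *ᵥ (z t j) - u (t+1)) + α • z t j)))
    (Aα : ℕ → Matrix (Fin d) (Fin d) ℝ)
    (hAα : ∀ t, Aα t = (S t)ᵀ * (S t) + α • (1 : Matrix (Fin d) (Fin d) ℝ)) :
    ∀ t : ℕ, ensCov J (z (t+1)) =
      ensCov J (z t)
      - (2*h) • (ensCov J (z t) * Aα (t+1) * ensCov J (z t))
      + h^2 • (ensCov J (z t) * Aα (t+1) * ensCov J (z t) * Aα (t+1) * ensCov J (z t)) :=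
  deki_covariance_recursion_general α h S u z hupd Aα hAα
end
end

section
/- One-step energy inequality for the DEKI spread: suppose the operator norms satisfy ‖A_{t+1}‖ ≤ A_max for some A_max > 0 (so that αI ⪯ A_{t+1}^{(α)} and ‖A_{t+1}^{(α)}‖ ≤ A_max + α). Then the DEKI spread energy satisfies E_{t+1} ≤ E_t − (2hα/J)·E_t² + h²(A_max + α)²·E_t³. -/
open Matrix BigOperators

noncomputable section

/-- Squared Euclidean norm of a vector in `ℝ^d`. -/
def enormSq {d : ℕ} (v : Fin d → ℝ) : ℝ := ∑ i, (v i)^2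

/-- Ensemble spread energy `E = (1/J)∑_j ‖e^{(j)}‖²`. -/
def ensEnergy {d : ℕ} (J : ℕ) (z : Fin J → Fin d → ℝ) : ℝ :=
  (J : ℝ)⁻¹ * ∑ j, enormSq (ensSpread J z j)

/-- The (Euclidean) operator norm of a square matrix. -/
def opNorm {d : ℕ} (M : Matrix (Fin d) (Fin d) ℝ) : ℝ :=
  ‖Matrix.toEuclideanCLM (𝕜 := ℝ) M‖

/-!
The DEKI update acts on every particle by the same affine map, so the spreads evolve linearly,
`e ↦ e - h C A^{(α)} e`, and expanding the square gives
`E_{t+1} = E_t - (2h/J) ∑ⱼ ⟨eⱼ, C A^{(α)} eⱼ⟩ + (h²/J) ∑ⱼ ‖C A^{(α)} eⱼ‖²`.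
Since `C = J⁻¹ ∑ₖ eₖ eₖᵀ`, the cross term is `J⁻¹ ∑ⱼₖ ⟨eⱼ, eₖ⟩ ⟨eₖ, A^{(α)} eⱼ⟩`. Its `SᵀS` part is
a sum of entries of the Hadamard product of two Gram matrices, hence nonnegative; its `α` part is
`α J⁻¹ ∑ⱼₖ ⟨eⱼ, eₖ⟩² ≥ α J⁻¹ ∑ⱼ ‖eⱼ‖⁴ ≥ α E_t²` by Cauchy–Schwarz. For the last term,
`‖C v‖ ≤ E_t ‖v‖` (the operator norm of a covariance is at most its trace) and
`‖A^{(α)} v‖ ≤ (A_max + α) ‖v‖`.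
-/

section Vectors

variable {n : ℕ}

lemma enormSq_eq_dotProduct (v : Fin n → ℝ) : enormSq v = v ⬝ᵥ v := by
  simp [enormSq, dotProduct, sq]

lemma enormSq_eq_norm_sq (v : Fin n → ℝ) : enormSq v = ‖WithLp.toLp 2 v‖ ^ 2 := by
  simp [enormSq, EuclideanSpace.real_norm_sq_eq]

lemma enormSq_nonneg (v : Fin n → ℝ) : 0 ≤ enormSq v := by
  rw [enormSq_eq_norm_sq]; positivity

lemma enormSq_sub_smul (a b : Fin n → ℝ) (h : ℝ) :
    enormSq (a - h • b) = enormSq a - 2 * h * (a ⬝ᵥ b) + h ^ 2 * enormSq b := by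
  simp only [enormSq_eq_dotProduct, sub_dotProduct, dotProduct_sub, smul_dotProduct,
    dotProduct_smul, dotProduct_comm b a, smul_eq_mul]
  ring

lemma abs_dotProduct_le_norm_mul_norm (v w : Fin n → ℝ) :
    |v ⬝ᵥ w| ≤ ‖WithLp.toLp 2 v‖ * ‖WithLp.toLp 2 w‖ := by
  simpa [EuclideanSpace.inner_toLp_toLp, dotProduct_comm] using
    abs_real_inner_le_norm (WithLp.toLp 2 v) (WithLp.toLp 2 w)

lemma norm_mulVec_le_opNorm_mul (M : Matrix (Fin n) (Fin n) ℝ) (v : Fin n → ℝ) :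
    ‖WithLp.toLp 2 (M *ᵥ v)‖ ≤ opNorm M * ‖WithLp.toLp 2 v‖ :=
  (Matrix.toEuclideanCLM (𝕜 := ℝ) M).le_opNorm (WithLp.toLp 2 v)

lemma norm_add_smul_one_mulVec_le {M : Matrix (Fin n) (Fin n) ℝ} {a α : ℝ} (hM : opNorm M ≤ a)
    (hα : 0 ≤ α) (v : Fin n → ℝ) :
    ‖WithLp.toLp 2 ((M + α • 1) *ᵥ v)‖ ≤ (a + α) * ‖WithLp.toLp 2 v‖ := by
  rw [add_mulVec, smul_mulVec, one_mulVec, WithLp.toLp_add, WithLp.toLp_smul, add_mul]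
  refine (norm_add_le _ _).trans (add_le_add ?_ ?_)
  · exact (norm_mulVec_le_opNorm_mul M v).trans (by gcongr)
  · rw [norm_smul, Real.norm_of_nonneg hα]

end Vectors

lemma sum_sum_dotProduct_mul_dotProduct_nonneg {ι m n : Type*} [Fintype ι] [Fintype m]
    [Fintype n] (f : ι → m → ℝ) (g : ι → n → ℝ) :
    0 ≤ ∑ i, ∑ j, (f i ⬝ᵥ f j) * (g i ⬝ᵥ g j) := by
  -- `(f i ⬝ᵥ f j) * (g i ⬝ᵥ g j) = (f i ⊗ g i) ⬝ᵥ (f j ⊗ g j)`: a Gram matrix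
  set x : ι → m × n → ℝ := fun i q => f i q.1 * g i q.2
  have hx : ∀ i j, (f i ⬝ᵥ f j) * (g i ⬝ᵥ g j) = x i ⬝ᵥ x j := fun i j => by
    simp only [dotProduct, Finset.sum_mul_sum, Fintype.sum_prod_type, x]
    exact Finset.sum_congr rfl fun _ _ => Finset.sum_congr rfl fun _ _ => by ring
  simp only [hx, ← dotProduct_sum, ← sum_dotProduct]
  exact dotProduct_star_self_nonneg _

section Ensembles

variable {d J : ℕ}

lemma ensEnergy_nonneg (z : Fin J → Fin d → ℝ) : 0 ≤ ensEnergy J z :=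
  mul_nonneg (by positivity) (Finset.sum_nonneg fun j _ => enormSq_nonneg _)

lemma ensMean_mulVec_add {d' : ℕ} (hJ : 0 < J) (K : Matrix (Fin d') (Fin d) ℝ)
    (c : Fin d' → ℝ) (z : Fin J → Fin d → ℝ) :
    ensMean J (fun j => K *ᵥ z j + c) = K *ᵥ ensMean J z + c := by
  have hJ' : (J : ℝ) ≠ 0 := by positivity
  simp only [ensMean, Finset.sum_add_distrib, ← mulVec_sum, Finset.sum_const, Finset.card_univ,
    Fintype.card_fin, mulVec_smul, smul_add, ← Nat.cast_smul_eq_nsmul ℝ, inv_smul_smul₀ hJ']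

lemma ensSpread_mulVec_add {d' : ℕ} (K : Matrix (Fin d') (Fin d) ℝ) (c : Fin d' → ℝ)
    (z : Fin J → Fin d → ℝ) (j : Fin J) :
    ensSpread J (fun j => K *ᵥ z j + c) j = K *ᵥ ensSpread J z j := by
  simp only [ensSpread, ensMean_mulVec_add j.pos, mulVec_sub]
  abel

lemma ensSpread_deki_step {p : ℕ} (S : Matrix (Fin p) (Fin d) ℝ) (u : Fin p → ℝ) (α h : ℝ)
    {z z' : Fin J → Fin d → ℝ}
    (hz : ∀ j, z' j = z j - h • (ensCov J z *ᵥ (Sᵀ *ᵥ (S *ᵥ z j - u) + α • z j))) (j : Fin J) :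
    ensSpread J z' j =
      ensSpread J z j - h • (ensCov J z *ᵥ ((Sᵀ * S + α • 1) *ᵥ ensSpread J z j)) := by
  set K := 1 - h • (ensCov J z * (Sᵀ * S + α • 1))
  have hK : ∀ x, K *ᵥ x = x - h • (ensCov J z *ᵥ ((Sᵀ * S + α • 1) *ᵥ x)) := fun x => by
    rw [sub_mulVec, one_mulVec, smul_mulVec, mulVec_mulVec]
  have hz' : z' = fun j => K *ᵥ z j + h • (ensCov J z *ᵥ (Sᵀ *ᵥ u)) := by
    funext j
    rw [hz, hK, add_mulVec, smul_mulVec, one_mulVec, ← mulVec_mulVec, mulVec_sub, mulVec_add,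
      mulVec_sub, mulVec_add]
    module
  rw [hz', ensSpread_mulVec_add, hK]

lemma ensEnergy_eq_of_ensSpread_eq_sub_smul {z z' : Fin J → Fin d → ℝ} (h : ℝ)
    (w : Fin J → Fin d → ℝ) (hz : ∀ j, ensSpread J z' j = ensSpread J z j - h • w j) :
    ensEnergy J z' = ensEnergy J z - 2 * h * ((J : ℝ)⁻¹ * ∑ j, ensSpread J z j ⬝ᵥ w j)
      + h ^ 2 * ((J : ℝ)⁻¹ * ∑ j, enormSq (w j)) := by
  simp only [ensEnergy, hz, enormSq_sub_smul, Finset.sum_add_distrib, Finset.sum_sub_distrib,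
    ← Finset.mul_sum]
  ring

lemma ensCov_mulVec (z : Fin J → Fin d → ℝ) (v : Fin d → ℝ) :
    ensCov J z *ᵥ v = (J : ℝ)⁻¹ • ∑ k, (ensSpread J z k ⬝ᵥ v) • ensSpread J z k := by
  simp only [ensCov, smul_mulVec, sum_mulVec, vecMulVec_mulVec, op_smul_eq_smul]

lemma norm_ensCov_mulVec_le (z : Fin J → Fin d → ℝ) (v : Fin d → ℝ) :
    ‖WithLp.toLp 2 (ensCov J z *ᵥ v)‖ ≤ ensEnergy J z * ‖WithLp.toLp 2 v‖ := by
  set e := ensSpread J z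
  rw [ensCov_mulVec, WithLp.toLp_smul, WithLp.toLp_sum, norm_smul,
    Real.norm_of_nonneg (by positivity), ensEnergy, mul_assoc, Finset.sum_mul]
  gcongr
  refine (norm_sum_le _ _).trans (Finset.sum_le_sum fun k _ => ?_)
  rw [WithLp.toLp_smul, norm_smul, Real.norm_eq_abs, enormSq_eq_norm_sq]
  calc |e k ⬝ᵥ v| * ‖WithLp.toLp 2 (e k)‖
      ≤ ‖WithLp.toLp 2 (e k)‖ * ‖WithLp.toLp 2 v‖ * ‖WithLp.toLp 2 (e k)‖ := by
        gcongr; exact abs_dotProduct_le_norm_mul_norm _ _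
    _ = ‖WithLp.toLp 2 (e k)‖ ^ 2 * ‖WithLp.toLp 2 v‖ := by ring

lemma sq_ensEnergy_le (z : Fin J → Fin d → ℝ) :
    ensEnergy J z ^ 2 ≤ (J : ℝ)⁻¹ * ∑ j, ∑ k, (ensSpread J z j ⬝ᵥ ensSpread J z k) ^ 2 := by
  set e := ensSpread J z
  have hdiag : ∑ j, enormSq (e j) ^ 2 ≤ ∑ j, ∑ k, (e j ⬝ᵥ e k) ^ 2 := by
    gcongr with j
    rw [enormSq_eq_dotProduct]
    exact Finset.single_le_sum (f := fun k => (e j ⬝ᵥ e k) ^ 2) (fun _ _ => sq_nonneg _)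
      (Finset.mem_univ j)
  have hcs := sq_sum_le_card_mul_sum_sq (s := Finset.univ) (f := fun j => enormSq (e j))
  simp only [Finset.card_univ, Fintype.card_fin] at hcs
  calc ensEnergy J z ^ 2 = (J : ℝ)⁻¹ * ((J : ℝ)⁻¹ * (∑ j, enormSq (e j)) ^ 2) := by
        rw [ensEnergy]; ring
    _ ≤ (J : ℝ)⁻¹ * ((J : ℝ)⁻¹ * J * ∑ j, enormSq (e j) ^ 2) := by
        rw [mul_assoc]; gcongr
    _ ≤ (J : ℝ)⁻¹ * ∑ j, ∑ k, (e j ⬝ᵥ e k) ^ 2 := by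
        gcongr
        -- `J⁻¹ * J ≤ 1` rather than `= 1`, so that `J = 0` needs no separate case
        calc (J : ℝ)⁻¹ * J * ∑ j, enormSq (e j) ^ 2 ≤ 1 * ∑ j, enormSq (e j) ^ 2 := by
              gcongr; exact inv_mul_le_one_of_le₀ le_rfl (by positivity)
          _ ≤ _ := by rw [one_mul]; exact hdiag

lemma sum_dotProduct_ensCov_mulVec (z : Fin J → Fin d → ℝ) (v : Fin J → Fin d → ℝ) :
    ∑ j, ensSpread J z j ⬝ᵥ (ensCov J z *ᵥ v j) =
      (J : ℝ)⁻¹ * ∑ j, ∑ k, (ensSpread J z j ⬝ᵥ ensSpread J z k) * (ensSpread J z k ⬝ᵥ v j) := by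
  simp only [ensCov_mulVec, dotProduct_smul, dotProduct_sum, smul_eq_mul, Finset.mul_sum]
  exact Finset.sum_congr rfl fun _ _ => Finset.sum_congr rfl fun _ _ => by ring

lemma mul_sq_ensEnergy_le_sum_dotProduct_ensCov_mulVec {p : ℕ} (S : Matrix (Fin p) (Fin d) ℝ)
    {α : ℝ} (hα : 0 ≤ α) (z : Fin J → Fin d → ℝ) :
    α * ensEnergy J z ^ 2 ≤
      ∑ j, ensSpread J z j ⬝ᵥ (ensCov J z *ᵥ ((Sᵀ * S + α • 1) *ᵥ ensSpread J z j)) := by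
  rw [sum_dotProduct_ensCov_mulVec]
  set e := ensSpread J z
  have hterm : ∀ j k, (e j ⬝ᵥ e k) * (e k ⬝ᵥ (Sᵀ * S + α • 1) *ᵥ e j) =
      (S *ᵥ e j ⬝ᵥ S *ᵥ e k) * (e j ⬝ᵥ e k) + α * (e j ⬝ᵥ e k) ^ 2 := fun j k => by
    rw [add_mulVec, smul_mulVec, one_mulVec, ← mulVec_mulVec, dotProduct_add, dotProduct_smul,
      dotProduct_mulVec, vecMul_transpose, dotProduct_comm (e k) (e j),
      dotProduct_comm (S *ᵥ e k), smul_eq_mul]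
    ring
  simp only [hterm, Finset.sum_add_distrib, ← Finset.mul_sum]
  calc α * ensEnergy J z ^ 2 ≤ α * ((J : ℝ)⁻¹ * ∑ j, ∑ k, (e j ⬝ᵥ e k) ^ 2) :=
        mul_le_mul_of_nonneg_left (sq_ensEnergy_le z) hα
    _ = (J : ℝ)⁻¹ * (0 + α * ∑ j, ∑ k, (e j ⬝ᵥ e k) ^ 2) := by ring
    _ ≤ _ := by
        gcongr
        exact sum_sum_dotProduct_mul_dotProduct_nonneg (fun j => S *ᵥ e j) e

lemma sum_enormSq_ensCov_mulVec_le {M : Matrix (Fin d) (Fin d) ℝ} {a α : ℝ} (hM : opNorm M ≤ a)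
    (hα : 0 ≤ α) (z : Fin J → Fin d → ℝ) :
    (J : ℝ)⁻¹ * ∑ j, enormSq (ensCov J z *ᵥ ((M + α • 1) *ᵥ ensSpread J z j)) ≤
      (a + α) ^ 2 * ensEnergy J z ^ 3 := by
  set E := ensEnergy J z with hE
  have hpt : ∀ j, enormSq (ensCov J z *ᵥ ((M + α • 1) *ᵥ ensSpread J z j)) ≤
      (E * (a + α)) ^ 2 * enormSq (ensSpread J z j) := fun j => by
    have hnorm := (norm_ensCov_mulVec_le z _).trans
      (mul_le_mul_of_nonneg_left (norm_add_smul_one_mulVec_le hM hα (ensSpread J z j))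
        (ensEnergy_nonneg z))
    rw [enormSq_eq_norm_sq, enormSq_eq_norm_sq]
    calc _ ≤ (E * ((a + α) * ‖WithLp.toLp 2 (ensSpread J z j)‖)) ^ 2 := by gcongr
      _ = _ := by ring
  calc (J : ℝ)⁻¹ * ∑ j, enormSq (ensCov J z *ᵥ ((M + α • 1) *ᵥ ensSpread J z j))
      ≤ (J : ℝ)⁻¹ * ∑ j, (E * (a + α)) ^ 2 * enormSq (ensSpread J z j) := by
        gcongr with j; exact hpt j
    _ = (a + α) ^ 2 * E ^ 3 := by rw [← Finset.mul_sum, hE, ensEnergy]; ring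

end Ensembles

theorem deki_energy_one_step_general
    {d p J : ℕ}
    (α h Amax : ℝ) (hα : 0 < α) (hh : 0 < h)
    (S : ℕ → Matrix (Fin p) (Fin d) ℝ) (u : ℕ → Fin p → ℝ)
    (z : ℕ → Fin J → Fin d → ℝ)
    (hupd : ∀ t j, z (t+1) j = z t j -
      h • ((ensCov J (z t)) *ᵥ ((S (t+1))ᵀ *ᵥ ((S (t+1)) *ᵥ (z t j) - u (t+1)) + α • z t j)))
    (t : ℕ)
    (hA : opNorm ((S (t+1))ᵀ * (S (t+1))) ≤ Amax) :
    ensEnergy J (z (t+1)) ≤ ensEnergy J (z t)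
      - (2*h*α/(J:ℝ)) * (ensEnergy J (z t))^2
      + h^2 * (Amax + α)^2 * (ensEnergy J (z t))^3 := by
  rw [ensEnergy_eq_of_ensSpread_eq_sub_smul h _ (ensSpread_deki_step _ _ α h (hupd t))]
  calc _ ≤ ensEnergy J (z t) - 2 * h * ((J : ℝ)⁻¹ * (α * ensEnergy J (z t) ^ 2))
        + h ^ 2 * ((Amax + α) ^ 2 * ensEnergy J (z t) ^ 3) := by
        gcongr _ - _ * (_ * ?_) + _ * ?_
        · exact mul_sq_ensEnergy_le_sum_dotProduct_ensCov_mulVec (S (t+1)) hα.le (z t)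
        · exact sum_enormSq_ensCov_mulVec_le hA hα.le (z t)
    _ = _ := by ring

/-- One-step energy inequality for the DEKI spread: if `‖A_{t+1}‖ = ‖S_{t+1}ᵀS_{t+1}‖ ≤ A_max`,
then `E_{t+1} ≤ E_t − (2hα/J)·E_t² + h²(A_max + α)²·E_t³`. -/
theorem deki_energy_one_step
    {d p J : ℕ} (hd : 0 < d) (hp : 0 < p) (hJ : 0 < J)
    (α h Amax : ℝ) (hα : 0 < α) (hh : 0 < h) (hAmax : 0 < Amax)
    (S : ℕ → Matrix (Fin p) (Fin d) ℝ) (u : ℕ → Fin p → ℝ)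
    (z : ℕ → Fin J → Fin d → ℝ)
    (hupd : ∀ t j, z (t+1) j = z t j -
      h • ((ensCov J (z t)) *ᵥ ((S (t+1))ᵀ *ᵥ ((S (t+1)) *ᵥ (z t j) - u (t+1)) + α • z t j)))
    (t : ℕ)
    (hA : opNorm ((S (t+1))ᵀ * (S (t+1))) ≤ Amax) :
    ensEnergy J (z (t+1)) ≤ ensEnergy J (z t)
      - (2*h*α/(J:ℝ)) * (ensEnergy J (z t))^2
      + h^2 * (Amax + α)^2 * (ensEnergy J (z t))^3 :=
  deki_energy_one_step_general α h Amax hα hh S u z hupd t hA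

end
end

section
/- Ensemble collapse upper bound (upper half of Lemma 3.2): suppose ‖A_t‖ ≤ A_max for all t ≥ 1, that E_0 > 0, and that the step size satisfies h ≤ min(α/(J(A_max + α)²), J/α)·E_0^{-1}. Then for every t ∈ ℕ one has E_t ≤ J/(hα(t+1)), and consequently the sample covariance satisfies C_t ⪯ (J/(hα(t+1)))·I in the Loewner (positive semi-definite) order. -/
open Matrix BigOperators

noncomputable section

/-!
The update moves every particle by the same affine map, so the spreads evolve linearly,
`e ↦ e - h C (SᵀS + α) e`. Expanding the energy gives
`E' = E - 2h/J ∑ eⱼᵀ C (SᵀS + α) eⱼ + h²/J ∑ ‖C (SᵀS + α) eⱼ‖²`.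
By the Schur product theorem the `SᵀS` part of the first sum is nonnegative, and the `α` part is
at least `α E²` by Cauchy–Schwarz; since `‖C‖ ≤ tr C = E`, the second sum is at most
`J (A_max + α)² E³`. As long as `E ≤ E₀`, the step size condition makes the cubic term at most
half of the quadratic one, so `E' ≤ E - (hα/J) E²`, which keeps `E` decreasing and, with
`(hα/J) E₀ ≤ 1`, forces `(hα/J) E_t ≤ 1/(t+1)`. Finally `C ⪯ ‖C‖ I ⪯ E I`.
-/

open scoped Matrix.Norms.L2Operator

theorem sum_inner_mul_inner_nonneg {ι E F : Type*} [Fintype ι]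
    [NormedAddCommGroup E] [InnerProductSpace ℝ E] [NormedAddCommGroup F] [InnerProductSpace ℝ F]
    (f : ι → E) (g : ι → F) : 0 ≤ ∑ j, ∑ k, inner ℝ (f j) (f k) * inner ℝ (g j) (g k) := by
  have := ((posSemidef_gram ℝ f).hadamard (posSemidef_gram ℝ g)).dotProduct_mulVec_nonneg 1
  simpa [dotProduct, mulVec, gram] using this

theorem sum_dotProduct_mul_dotProduct_nonneg {ι m n : Type*} [Fintype ι] [Fintype m] [Fintype n]
    (f : ι → m → ℝ) (g : ι → n → ℝ) : 0 ≤ ∑ j, ∑ k, (f j ⬝ᵥ f k) * (g j ⬝ᵥ g k) := by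
  simpa [EuclideanSpace.inner_eq_star_dotProduct, dotProduct_comm] using
    sum_inner_mul_inner_nonneg (fun j => WithLp.toLp 2 (f j)) (fun j => WithLp.toLp 2 (g j))

theorem sq_sum_dotProduct_self_le {ι m : Type*} [Fintype ι] [Fintype m] (f : ι → m → ℝ) :
    (∑ j, f j ⬝ᵥ f j) ^ 2 ≤ Fintype.card ι * ∑ j, ∑ k, (f j ⬝ᵥ f k) ^ 2 :=
  calc (∑ j, f j ⬝ᵥ f j) ^ 2 ≤ Fintype.card ι * ∑ j, (f j ⬝ᵥ f j) ^ 2 :=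
        sq_sum_le_card_mul_sum_sq
    _ ≤ Fintype.card ι * ∑ j, ∑ k, (f j ⬝ᵥ f k) ^ 2 := by
        gcongr with j
        exact Finset.single_le_sum (f := fun k => (f j ⬝ᵥ f k) ^ 2) (fun _ _ => sq_nonneg _)
          (Finset.mem_univ j)

theorem succ_mul_le_one_of_le_sub_sq {y : ℕ → ℝ} (h0 : y 0 ≤ 1)
    (hy : ∀ t, y (t + 1) ≤ y t - y t ^ 2) (t : ℕ) : (t + 1) * y t ≤ 1 := by
  induction t with
  | zero => simpa using h0
  | succ t ih =>
    have hy1 : y t ≤ 1 := by nlinarith [sq_nonneg (y t)]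
    push_cast
    -- `1 - (t + 2) (y - y²) = (1 - y) (1 - (t + 1) y) + y²`
    nlinarith [hy t, mul_nonneg (sub_nonneg.2 hy1) (sub_nonneg.2 ih), sq_nonneg (y t)]

theorem le_sub_mul_sq_of_le_sub_two_mul_sq_add_mul_cube {x : ℕ → ℝ} {a b : ℝ} (ha : 0 ≤ a)
    (hb : 0 ≤ b) (h0 : b * x 0 ≤ a) (hx : ∀ t, x (t + 1) ≤ x t - 2 * a * x t ^ 2 + b * x t ^ 3)
    (t : ℕ) : x (t + 1) ≤ x t - a * x t ^ 2 := by
  have hsmall : ∀ t, b * x t ≤ a → x (t + 1) ≤ x t - a * x t ^ 2 := fun t ht => by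
    nlinarith [hx t, mul_le_mul_of_nonneg_right ht (sq_nonneg (x t))]
  suffices hle : ∀ t, x t ≤ x 0 from hsmall t ((mul_le_mul_of_nonneg_left (hle t) hb).trans h0)
  intro t
  induction t with
  | zero => rfl
  | succ t ih =>
    have := hsmall t ((mul_le_mul_of_nonneg_left ih hb).trans h0)
    linarith [mul_nonneg ha (sq_nonneg (x t))]

namespace Matrix

variable {n : Type*} [Fintype n] [DecidableEq n]

lemma toEuclideanCLM_vecMulVec (a b : n → ℝ) :
    toEuclideanCLM (𝕜 := ℝ) (vecMulVec a b)
      = InnerProductSpace.rankOne ℝ (WithLp.toLp 2 a) (WithLp.toLp 2 b) := by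
  ext1 x
  change WithLp.toLp 2 (vecMulVec a b *ᵥ x.ofLp) = _
  simp [vecMulVec_mulVec, EuclideanSpace.inner_eq_star_dotProduct, dotProduct_comm]

lemma l2_opNorm_vecMulVec (a b : n → ℝ) :
    ‖vecMulVec a b‖ = ‖WithLp.toLp 2 a‖ * ‖WithLp.toLp 2 b‖ := by
  rw [cstar_norm_def, toEuclideanCLM_vecMulVec, InnerProductSpace.norm_rankOne]

lemma l2_opNorm_add_smul_one_le (A : Matrix n n ℝ) {α : ℝ} (hα : 0 ≤ α) :
    ‖A + α • 1‖ ≤ ‖A‖ + α := by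
  grw [norm_add_le, norm_smul_le]
  rw [cstar_norm_def (1 : Matrix n n ℝ), map_one, Real.norm_of_nonneg hα]
  grw [ContinuousLinearMap.one_def, ContinuousLinearMap.norm_id_le]
  simp

end Matrix

namespace DEKI

variable {d J : ℕ}

lemma enormSq_eq_dotProduct (v : Fin d → ℝ) : enormSq v = v ⬝ᵥ v := by
  simp [enormSq, dotProduct, sq]

lemma enormSq_eq_norm_sq (v : Fin d → ℝ) : enormSq v = ‖WithLp.toLp 2 v‖ ^ 2 := by
  simp [enormSq, EuclideanSpace.norm_sq_eq]

lemma enormSq_nonneg (v : Fin d → ℝ) : 0 ≤ enormSq v := by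
  rw [enormSq_eq_norm_sq]
  positivity

lemma ensEnergy_nonneg (z : Fin J → Fin d → ℝ) : 0 ≤ ensEnergy J z :=
  mul_nonneg (by positivity) (Finset.sum_nonneg fun _ _ => enormSq_nonneg _)

lemma sum_enormSq_ensSpread (hJ : 0 < J) (z : Fin J → Fin d → ℝ) :
    ∑ j, enormSq (ensSpread J z j) = J * ensEnergy J z := by
  rw [ensEnergy, mul_inv_cancel_left₀ (by positivity)]

lemma enormSq_mulVec_le (A : Matrix (Fin d) (Fin d) ℝ) (v : Fin d → ℝ) :
    enormSq (A *ᵥ v) ≤ ‖A‖ ^ 2 * enormSq v := by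
  rw [enormSq_eq_norm_sq, enormSq_eq_norm_sq, ← mul_pow, ← toEuclideanCLM_toLp (𝕜 := ℝ)]
  gcongr
  exact (toEuclideanCLM (𝕜 := ℝ) A).le_opNorm _

lemma dotProduct_mulVec_le (A : Matrix (Fin d) (Fin d) ℝ) (x : Fin d → ℝ) :
    x ⬝ᵥ (A *ᵥ x) ≤ ‖A‖ * enormSq x := by
  rw [← inner_toEuclideanCLM, enormSq_eq_norm_sq, cstar_norm_def]
  grw [real_inner_le_norm, ContinuousLinearMap.le_opNorm]
  exact (by ring : _ = _).le

lemma norm_ensCov_le (z : Fin J → Fin d → ℝ) : ‖ensCov J z‖ ≤ ensEnergy J z := by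
  unfold ensCov ensEnergy
  grw [norm_smul_le, norm_sum_le]
  simp [l2_opNorm_vecMulVec, enormSq_eq_norm_sq, sq]

lemma ensMean_mulVec_add (hJ : 0 < J) (B : Matrix (Fin d) (Fin d) ℝ) (c : Fin d → ℝ)
    (z : Fin J → Fin d → ℝ) :
    ensMean J (fun j => B *ᵥ z j + c) = B *ᵥ ensMean J z + c := by
  simp only [ensMean, Finset.sum_add_distrib, Finset.sum_const, Finset.card_univ,
    Fintype.card_fin, ← Matrix.mulVec_sum, smul_add, Matrix.mulVec_smul,
    ← Nat.cast_smul_eq_nsmul ℝ, smul_smul,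
    inv_mul_cancel₀ (Nat.cast_ne_zero.mpr hJ.ne' : (J : ℝ) ≠ 0), one_smul]

lemma ensSpread_mulVec_add (hJ : 0 < J) (B : Matrix (Fin d) (Fin d) ℝ) (c : Fin d → ℝ)
    (z : Fin J → Fin d → ℝ) (j : Fin J) :
    ensSpread J (fun j => B *ᵥ z j + c) j = B *ᵥ ensSpread J z j := by
  rw [ensSpread, ensSpread, ensMean_mulVec_add hJ, Matrix.mulVec_sub]
  abel

lemma ensCov_mulVec (z : Fin J → Fin d → ℝ) (x : Fin d → ℝ) :
    ensCov J z *ᵥ x = (J : ℝ)⁻¹ • ∑ k, (ensSpread J z k ⬝ᵥ x) • ensSpread J z k := by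
  simp [ensCov, Matrix.smul_mulVec, Matrix.sum_mulVec, vecMulVec_mulVec]

lemma sum_dotProduct_ensCov_mulVec (z : Fin J → Fin d → ℝ) (w : Fin J → Fin d → ℝ) :
    ∑ j, ensSpread J z j ⬝ᵥ (ensCov J z *ᵥ w j) = (J : ℝ)⁻¹ *
      ∑ j, ∑ k, (ensSpread J z j ⬝ᵥ ensSpread J z k) * (ensSpread J z k ⬝ᵥ w j) := by
  simp [ensCov_mulVec, dotProduct_sum, Finset.mul_sum, mul_comm]

lemma ensEnergy_sub_smul {z z' : Fin J → Fin d → ℝ} (h : ℝ) (w : Fin J → Fin d → ℝ)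
    (hz : ∀ j, ensSpread J z' j = ensSpread J z j - h • w j) :
    ensEnergy J z' = ensEnergy J z - 2 * h * ((J : ℝ)⁻¹ * ∑ j, ensSpread J z j ⬝ᵥ w j)
      + h ^ 2 * ((J : ℝ)⁻¹ * ∑ j, enormSq (w j)) := by
  have hsq : ∀ j, enormSq (ensSpread J z' j) = enormSq (ensSpread J z j)
      - 2 * h * (ensSpread J z j ⬝ᵥ w j) + h ^ 2 * enormSq (w j) := fun j => by
    simp only [hz, enormSq_eq_dotProduct, sub_dotProduct, dotProduct_sub, smul_dotProduct,
      dotProduct_smul, dotProduct_comm (w j), smul_eq_mul]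
    ring
  simp only [ensEnergy, hsq, Finset.sum_add_distrib, Finset.sum_sub_distrib, ← Finset.mul_sum]
  ring

lemma mul_sq_ensEnergy_le {p : ℕ} (hJ : 0 < J) (z : Fin J → Fin d → ℝ)
    (S : Matrix (Fin p) (Fin d) ℝ) {α : ℝ} (hα : 0 ≤ α) :
    α * ensEnergy J z ^ 2
      ≤ ∑ j, ensSpread J z j ⬝ᵥ (ensCov J z *ᵥ ((Sᵀ * S + α • 1) *ᵥ ensSpread J z j)) := by
  rw [sum_dotProduct_ensCov_mulVec]
  set e := ensSpread J z
  have hM : ∀ j k, e k ⬝ᵥ ((Sᵀ * S + α • 1) *ᵥ e j)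
      = (S *ᵥ e j) ⬝ᵥ (S *ᵥ e k) + α * (e j ⬝ᵥ e k) := by
    intro j k
    rw [Matrix.add_mulVec, ← Matrix.mulVec_mulVec, Matrix.smul_mulVec, Matrix.one_mulVec,
      dotProduct_add, Matrix.dotProduct_mulVec, Matrix.vecMul_transpose, dotProduct_smul,
      smul_eq_mul, dotProduct_comm (e k), dotProduct_comm (S *ᵥ e k)]
  have hgram := sum_dotProduct_mul_dotProduct_nonneg e (fun j => S *ᵥ e j)
  have hreg : ∑ j, ∑ k, (e j ⬝ᵥ e k) * (α * (e j ⬝ᵥ e k))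
      = α * ∑ j, ∑ k, (e j ⬝ᵥ e k) ^ 2 := by
    simp only [Finset.mul_sum, sq, mul_left_comm α]
  have hQ : J * ensEnergy J z ^ 2 ≤ ∑ j, ∑ k, (e j ⬝ᵥ e k) ^ 2 := by
    have hsq := sq_sum_dotProduct_self_le e
    have hE : ∑ j, e j ⬝ᵥ e j = J * ensEnergy J z := by
      simp only [← enormSq_eq_dotProduct]
      exact sum_enormSq_ensSpread hJ z
    rw [hE, Fintype.card_fin, mul_pow, sq (J : ℝ), mul_assoc] at hsq
    exact le_of_mul_le_mul_left hsq (Nat.cast_pos.mpr hJ)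
  simp only [hM, mul_add, Finset.sum_add_distrib, hreg]
  rw [← mul_add, le_inv_mul_iff₀ (Nat.cast_pos.mpr hJ)]
  linarith [mul_le_mul_of_nonneg_left hQ hα]

lemma ensSpread_deki_update {p : ℕ} (hJ : 0 < J) (α h : ℝ) (S : Matrix (Fin p) (Fin d) ℝ)
    (u : Fin p → ℝ) {z z' : Fin J → Fin d → ℝ}
    (hz : ∀ j, z' j = z j - h • (ensCov J z *ᵥ (Sᵀ *ᵥ (S *ᵥ z j - u) + α • z j))) (j : Fin J) :
    ensSpread J z' j
      = ensSpread J z j - h • (ensCov J z *ᵥ ((Sᵀ * S + α • 1) *ᵥ ensSpread J z j)) := by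
  set C := ensCov J z
  set M := Sᵀ * S + α • (1 : Matrix (Fin d) (Fin d) ℝ)
  have hz' : z' = fun j => (1 - h • (C * M)) *ᵥ z j + h • (C *ᵥ (Sᵀ *ᵥ u)) := by
    funext j
    rw [hz]
    simp only [M, Matrix.sub_mulVec, Matrix.one_mulVec, Matrix.smul_mulVec,
      ← Matrix.mulVec_mulVec, Matrix.add_mulVec, Matrix.mulVec_sub, Matrix.mulVec_add,
      Matrix.mulVec_smul]
    module
  rw [hz', ensSpread_mulVec_add hJ, Matrix.sub_mulVec, Matrix.one_mulVec, Matrix.smul_mulVec,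
    Matrix.mulVec_mulVec]

lemma ensEnergy_step_le {p : ℕ} (hJ : 0 < J) {α h K : ℝ} (hα : 0 ≤ α) (hh : 0 ≤ h)
    (S : Matrix (Fin p) (Fin d) ℝ) (u : Fin p → ℝ) (hS : ‖Sᵀ * S‖ ≤ K)
    {z z' : Fin J → Fin d → ℝ}
    (hz : ∀ j, z' j = z j - h • (ensCov J z *ᵥ (Sᵀ *ᵥ (S *ᵥ z j - u) + α • z j))) :
    ensEnergy J z' ≤ ensEnergy J z - 2 * (h * α / J) * ensEnergy J z ^ 2
      + h ^ 2 * (K + α) ^ 2 * ensEnergy J z ^ 3 := by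
  set C := ensCov J z
  set M := Sᵀ * S + α • (1 : Matrix (Fin d) (Fin d) ℝ)
  have hfirst := mul_sq_ensEnergy_le hJ z S hα
  have hsecond : ∑ j, enormSq (C *ᵥ (M *ᵥ ensSpread J z j))
      ≤ (ensEnergy J z * (K + α)) ^ 2 * (J * ensEnergy J z) :=
    calc ∑ j, enormSq (C *ᵥ (M *ᵥ ensSpread J z j))
        ≤ ∑ j, ‖C * M‖ ^ 2 * enormSq (ensSpread J z j) := by
          gcongr with j
          rw [Matrix.mulVec_mulVec]
          exact enormSq_mulVec_le _ _
      _ = ‖C * M‖ ^ 2 * (J * ensEnergy J z) := by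
          rw [← Finset.mul_sum, sum_enormSq_ensSpread hJ]
      _ ≤ (ensEnergy J z * (K + α)) ^ 2 * (J * ensEnergy J z) := by
          have := ensEnergy_nonneg z
          grw [norm_mul_le, norm_ensCov_le, l2_opNorm_add_smul_one_le _ hα, hS]
  rw [ensEnergy_sub_smul h _ (ensSpread_deki_update hJ α h S u hz)]
  calc _ ≤ ensEnergy J z - 2 * h * ((J : ℝ)⁻¹ * (α * ensEnergy J z ^ 2))
        + h ^ 2 * ((J : ℝ)⁻¹ * ((ensEnergy J z * (K + α)) ^ 2 * (J * ensEnergy J z))) := by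
        gcongr
    _ = _ := by field_simp

lemma posSemidef_ensCov (z : Fin J → Fin d → ℝ) : (ensCov J z).PosSemidef :=
  (posSemidef_sum _ fun j _ => by
    simpa using posSemidef_vecMulVec_self_star (ensSpread J z j)).smul (by positivity)

lemma posSemidef_smul_one_sub_ensCov {z : Fin J → Fin d → ℝ} {c : ℝ}
    (hc : ensEnergy J z ≤ c) : (c • 1 - ensCov J z).PosSemidef := by
  refine .of_dotProduct_mulVec_nonneg ((isHermitian_one.smul (IsSelfAdjoint.all c)).sub
    (posSemidef_ensCov z).isHermitian) fun x => ?_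
  have := (dotProduct_mulVec_le (ensCov J z) x).trans
    (mul_le_mul_of_nonneg_right ((norm_ensCov_le z).trans hc) (enormSq_nonneg x))
  simp only [star_trivial, Matrix.sub_mulVec, Matrix.smul_mulVec, Matrix.one_mulVec,
    dotProduct_sub, dotProduct_smul, smul_eq_mul, ← enormSq_eq_dotProduct]
  linarith

end DEKI

theorem deki_ensemble_collapse_upper_general
    {d p J : ℕ} (hJ : 0 < J)
    (α h Amax : ℝ) (hα : 0 < α) (hh : 0 < h) (hAmax : 0 < Amax)
    (S : ℕ → Matrix (Fin p) (Fin d) ℝ) (u : ℕ → Fin p → ℝ)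
    (z : ℕ → Fin J → Fin d → ℝ)
    (hupd : ∀ t j, z (t+1) j = z t j -
      h • ((ensCov J (z t)) *ᵥ ((S (t+1))ᵀ *ᵥ ((S (t+1)) *ᵥ (z t j) - u (t+1)) + α • z t j)))
    (hA : ∀ t : ℕ, 1 ≤ t → opNorm ((S t)ᵀ * (S t)) ≤ Amax)
    (hE0 : 0 < ensEnergy J (z 0))
    (hstep : h ≤ min (α / ((J:ℝ) * (Amax + α)^2)) ((J:ℝ)/α) * (ensEnergy J (z 0))⁻¹) :
    ∀ t : ℕ,
      ensEnergy J (z t) ≤ (J:ℝ) / (h * α * ((t:ℝ) + 1)) ∧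
      (((J:ℝ) / (h * α * ((t:ℝ) + 1))) • (1 : Matrix (Fin d) (Fin d) ℝ)
        - ensCov J (z t)).PosSemidef := by
  set E := fun t => ensEnergy J (z t)
  have hhE0 := (le_mul_inv_iff₀ hE0).1 hstep
  have hsmall : h ^ 2 * (Amax + α) ^ 2 * E 0 ≤ h * α / J :=
    calc h ^ 2 * (Amax + α) ^ 2 * E 0 = h * (Amax + α) ^ 2 * (h * E 0) := by ring
      _ ≤ h * (Amax + α) ^ 2 * (α / (J * (Amax + α) ^ 2)) := by
        grw [hhE0, min_le_left]
      _ = h * α / J := by field_simp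
  have hinit : h * α / J * E 0 ≤ 1 :=
    calc h * α / J * E 0 = α / J * (h * E 0) := by ring
      _ ≤ α / J * (J / α) := by grw [hhE0, min_le_right]
      _ = 1 := by field_simp
  have hdecay := le_sub_mul_sq_of_le_sub_two_mul_sq_add_mul_cube (by positivity) (by positivity)
    hsmall fun t => DEKI.ensEnergy_step_le hJ hα.le hh.le _ _ (hA (t + 1) (by omega)) (hupd t)
  have hcollapse := succ_mul_le_one_of_le_sub_sq (y := fun t => h * α / J * E t) hinit fun t =>
    calc h * α / J * E (t + 1) ≤ h * α / J * (E t - h * α / J * E t ^ 2) := by grw [hdecay t]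
      _ = h * α / J * E t - (h * α / J * E t) ^ 2 := by ring
  have hbound : ∀ t : ℕ, E t ≤ J / (h * α * ((t : ℝ) + 1)) := fun t => by
    have := hcollapse t
    rw [le_div_iff₀ (by positivity)]
    field_simp at this
    linarith
  exact fun t => ⟨hbound t, DEKI.posSemidef_smul_one_sub_ensCov (hbound t)⟩

/-- Ensemble collapse upper bound (upper half of Lemma 3.2): if `‖A_t‖ ≤ A_max` for
all `t ≥ 1`, `E_0 > 0` and `h ≤ min(α/(J(A_max + α)²), J/α)·E_0⁻¹`, then for every
`t ∈ ℕ`, `E_t ≤ J/(hα(t+1))` and `C_t ⪯ (J/(hα(t+1)))·I` in the Loewner order. -/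
theorem deki_ensemble_collapse_upper
    {d p J : ℕ} (hd : 0 < d) (hp : 0 < p) (hJ : 0 < J)
    (α h Amax : ℝ) (hα : 0 < α) (hh : 0 < h) (hAmax : 0 < Amax)
    (S : ℕ → Matrix (Fin p) (Fin d) ℝ) (u : ℕ → Fin p → ℝ)
    (z : ℕ → Fin J → Fin d → ℝ)
    (hupd : ∀ t j, z (t+1) j = z t j -
      h • ((ensCov J (z t)) *ᵥ ((S (t+1))ᵀ *ᵥ ((S (t+1)) *ᵥ (z t j) - u (t+1)) + α • z t j)))
    (hA : ∀ t : ℕ, 1 ≤ t → opNorm ((S t)ᵀ * (S t)) ≤ Amax)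
    (hE0 : 0 < ensEnergy J (z 0))
    (hstep : h ≤ min (α / ((J:ℝ) * (Amax + α)^2)) ((J:ℝ)/α) * (ensEnergy J (z 0))⁻¹) :
    ∀ t : ℕ,
      ensEnergy J (z t) ≤ (J:ℝ) / (h * α * ((t:ℝ) + 1)) ∧
      (((J:ℝ) / (h * α * ((t:ℝ) + 1))) • (1 : Matrix (Fin d) (Fin d) ℝ)
        - ensCov J (z t)).PosSemidef :=
  deki_ensemble_collapse_upper_general hJ α h Amax hα hh hAmax S u z hupd hA hE0 hstep
end
end

section
/- Discrete Gronwall inequality with power-law weights: let λ ∈ (0,1], T ≥ 1, and let (Δ_t)_{t=0}^{T} and (c_t)_{t=0}^{T-1} be nonnegative reals satisfying Δ_{t+1} ≤ (1 − λ/(t+1))·Δ_t + c_t for all 0 ≤ t ≤ T−1. Then Δ_T ≤ (1/T)^λ·Δ_0 + 2·∑_{s=0}^{T-1} ((s+1)/T)^λ·c_s. -/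
open BigOperators

private lemma gronwall_factor_le (lam : ℝ) (hlam0 : 0 < lam) (hlam1 : lam ≤ 1) (r : ℕ) :
    1 - lam / ((r:ℝ) + 1) ≤ (((r:ℝ) + 1) / ((r:ℝ) + 2)) ^ lam := by
  have h1 : (0:ℝ) < (r:ℝ) + 1 := by positivity
  have h2 : (0:ℝ) < (r:ℝ) + 2 := by positivity
  -- rewrite base as 1 + s with s = -1/(r+2)
  have hbase : ((r:ℝ) + 1) / ((r:ℝ) + 2) = 1 + (-(1 / ((r:ℝ) + 2))) := by
    field_simp
    ring
  have hs : (-1:ℝ) ≤ -(1 / ((r:ℝ) + 2)) := by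
    rw [neg_le_neg_iff]
    rw [div_le_one h2]; linarith
  -- Bernoulli with exponent 1 + lam ≥ 1 applied to (1+s)^{1+lam}:
  have key : (1 - (1 + lam) * (1 / ((r:ℝ) + 2))) ≤ (((r:ℝ)+1)/((r:ℝ)+2)) ^ (1 + lam) := by
    have := one_add_mul_self_le_rpow_one_add (s := -(1 / ((r:ℝ) + 2))) hs
      (p := 1 + lam) (by linarith)
    rw [← hbase] at this
    calc 1 - (1 + lam) * (1 / ((r:ℝ) + 2))
        = 1 + (1 + lam) * (-(1 / ((r:ℝ) + 2))) := by ring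
      _ ≤ _ := this
  have hbpos : (0:ℝ) < ((r:ℝ)+1)/((r:ℝ)+2) := by positivity
  have hsplit : (((r:ℝ)+1)/((r:ℝ)+2)) ^ (1 + lam)
      = (((r:ℝ)+1)/((r:ℝ)+2)) * (((r:ℝ)+1)/((r:ℝ)+2)) ^ lam := by
    rw [Real.rpow_add hbpos, Real.rpow_one]
  rw [hsplit] at key
  -- from (1+r)/(2+r) * X ≥ 1 - (1+lam)/(2+r), deduce X ≥ 1 - lam/(1+r)
  have key2 : ((r:ℝ)+1) - lam ≤ ((r:ℝ)+1) * (((r:ℝ)+1)/((r:ℝ)+2)) ^ lam := by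
    have h := mul_le_mul_of_nonneg_left key h2.le
    have e1 : ((r:ℝ)+2) * (1 - (1 + lam) * (1 / ((r:ℝ) + 2))) = ((r:ℝ)+1) - lam := by
      field_simp; ring
    have e2 : ((r:ℝ)+2) * ((((r:ℝ)+1)/((r:ℝ)+2)) * (((r:ℝ)+1)/((r:ℝ)+2)) ^ lam)
        = ((r:ℝ)+1) * (((r:ℝ)+1)/((r:ℝ)+2)) ^ lam := by
      field_simp
    rw [e1, e2] at h
    exact h
  have : 1 - lam / ((r:ℝ)+1) = (((r:ℝ)+1) - lam) / ((r:ℝ)+1) := by field_simp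
  rw [this, div_le_iff₀ h1]
  linarith [key2]

private lemma gronwall_prod_le (lam : ℝ) (hlam0 : 0 < lam) (hlam1 : lam ≤ 1) (t : ℕ) :
    ∀ n, t ≤ n →
      (∏ r ∈ Finset.Ico t n, (1 - lam / ((r:ℝ) + 1)))
        ≤ (((t:ℝ) + 1) / ((n:ℝ) + 1)) ^ lam := by
  intro n hn
  induction n with
  | zero =>
      interval_cases t
      simp
  | succ n ih =>
      rcases Nat.lt_or_ge t (n+1) with h | h
      · have ht : t ≤ n := Nat.lt_succ_iff.mp h
        rw [Finset.prod_Ico_succ_top ht]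
        have hprod := ih ht
        have hfac := gronwall_factor_le lam hlam0 hlam1 n
        have hfnn : (0:ℝ) ≤ 1 - lam / ((n:ℝ) + 1) := by
          have : lam / ((n:ℝ)+1) ≤ 1 := by
            rw [div_le_one (by positivity)]; linarith
          linarith
        have hprodnn : (0:ℝ) ≤ ∏ r ∈ Finset.Ico t n, (1 - lam / ((r:ℝ) + 1)) := by
          apply Finset.prod_nonneg
          intro r _
          have : lam / ((r:ℝ)+1) ≤ 1 := by
            rw [div_le_one (by positivity)]
            have : (0:ℝ) ≤ r := Nat.cast_nonneg r
            linarith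
          linarith
        have hbnn : (0:ℝ) ≤ (((t:ℝ) + 1) / ((n:ℝ) + 1)) ^ lam :=
          Real.rpow_nonneg (by positivity) lam
        calc (∏ r ∈ Finset.Ico t n, (1 - lam / ((r:ℝ) + 1))) * (1 - lam / ((n:ℝ) + 1))
            ≤ (((t:ℝ) + 1) / ((n:ℝ) + 1)) ^ lam * ((((n:ℝ)+1)/((n:ℝ)+2)) ^ lam) := by
              apply mul_le_mul hprod hfac hfnn hbnn
          _ = ((((t:ℝ) + 1) / ((n:ℝ) + 1)) * (((n:ℝ)+1)/((n:ℝ)+2))) ^ lam := by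
              rw [← Real.mul_rpow (by positivity) (by positivity)]
          _ = (((t:ℝ) + 1) / (((n:ℕ):ℝ) + 1 + 1)) ^ lam := by
              congr 1
              rw [div_mul_div_comm, mul_comm ((t:ℝ)+1) ((n:ℝ)+1),
                mul_div_mul_left _ _ (by positivity : (0:ℝ) < (n:ℝ)+1).ne']
              ring
          _ = (((t:ℝ) + 1) / (((n+1:ℕ):ℝ) + 1)) ^ lam := by
              push_cast; ring_nf
      · obtain rfl : t = n + 1 := le_antisymm hn h
        simp only [Finset.Ico_self, Finset.prod_empty]
        rw [div_self (by positivity : (0:ℝ) < ((n+1:ℕ):ℝ)+1).ne', Real.one_rpow]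

/-- Discrete Gronwall inequality with power-law weights: if `λ ∈ (0,1]`, `T ≥ 1` and
nonnegative reals satisfy `Δ_{t+1} ≤ (1 − λ/(t+1))·Δ_t + c_t` for `0 ≤ t ≤ T−1`, then
`Δ_T ≤ (1/T)^λ·Δ_0 + 2·∑_{s=0}^{T-1} ((s+1)/T)^λ·c_s`. -/
theorem discrete_gronwall_power_weights
    (lam : ℝ) (hlam0 : 0 < lam) (hlam1 : lam ≤ 1)
    (T : ℕ) (hT : 1 ≤ T) (Δ c : ℕ → ℝ)
    (hΔ : ∀ t, t ≤ T → 0 ≤ Δ t) (hc : ∀ t, t < T → 0 ≤ c t)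
    (hrec : ∀ t, t < T → Δ (t+1) ≤ (1 - lam / ((t:ℝ) + 1)) * Δ t + c t) :
    Δ T ≤ (1 / (T:ℝ)) ^ lam * Δ 0 +
      2 * ∑ s ∈ Finset.range T, (((s:ℝ) + 1) / (T:ℝ)) ^ lam * c s := by
  set f : ℕ → ℝ := fun r => 1 - lam / ((r:ℝ) + 1) with hf
  have hfnn : ∀ r : ℕ, 0 ≤ f r := by
    intro r
    have : lam / ((r:ℝ)+1) ≤ 1 := by
      rw [div_le_one (by positivity)]
      have : (0:ℝ) ≤ r := Nat.cast_nonneg r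
      linarith
    simp only [hf]; linarith
  -- main unfolding by induction
  have main : ∀ n, n ≤ T →
      Δ n ≤ (∏ r ∈ Finset.range n, f r) * Δ 0 +
        ∑ s ∈ Finset.range n, (∏ r ∈ Finset.Ico (s+1) n, f r) * c s := by
    intro n
    induction n with
    | zero => intro _; simp
    | succ n ih =>
        intro hn
        have hn' : n ≤ T := Nat.le_of_succ_le hn
        have hnlt : n < T := hn
        have step := hrec n hnlt
        have ihn := ih hn'
        have hfn : 0 ≤ f n := hfnn n
        calc Δ (n+1) ≤ f n * Δ n + c n := step
          _ ≤ f n * ((∏ r ∈ Finset.range n, f r) * Δ 0 +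
                ∑ s ∈ Finset.range n, (∏ r ∈ Finset.Ico (s+1) n, f r) * c s) + c n := by
              have := mul_le_mul_of_nonneg_left ihn hfn
              linarith
          _ = (∏ r ∈ Finset.range (n+1), f r) * Δ 0 +
                ∑ s ∈ Finset.range (n+1), (∏ r ∈ Finset.Ico (s+1) (n+1), f r) * c s := by
              rw [Finset.prod_range_succ, Finset.sum_range_succ, mul_add,
                Finset.mul_sum]
              have h1 : ∀ s ∈ Finset.range n,
                  f n * ((∏ r ∈ Finset.Ico (s+1) n, f r) * c s)
                    = (∏ r ∈ Finset.Ico (s+1) (n+1), f r) * c s := by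
                intro s hs
                have hs' : s + 1 ≤ n := Finset.mem_range.mp hs
                rw [Finset.prod_Ico_succ_top hs']
                ring
              rw [Finset.sum_congr rfl h1, Finset.Ico_self, Finset.prod_empty]
              ring
  have hmain := main T le_rfl
  -- bound the coefficients
  have hTpos : (0:ℝ) < T := by exact_mod_cast hT
  have hQ : (∏ r ∈ Finset.range T, f r) ≤ (1 / (T:ℝ)) ^ lam := by
    have h0 := gronwall_prod_le lam hlam0 hlam1 0 T (Nat.zero_le T)
    simp only [Finset.range_eq_Ico] at *
    refine h0.trans ?_
    apply Real.rpow_le_rpow (by positivity) _ (le_of_lt hlam0)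
    rw [Nat.cast_zero]
    rw [div_le_div_iff₀ (by positivity) hTpos]
    linarith
  have hR : ∀ s : ℕ, s < T → (∏ r ∈ Finset.Ico (s+1) T, f r)
      ≤ 2 * (((s:ℝ) + 1) / (T:ℝ)) ^ lam := by
    intro s hs
    have h0 := gronwall_prod_le lam hlam0 hlam1 (s+1) T hs
    refine h0.trans ?_
    have hb1 : (((s+1:ℕ):ℝ) + 1) / ((T:ℝ) + 1) ≤ 2 * (((s:ℝ) + 1) / (T:ℝ)) := by
      rw [div_le_iff₀ (by positivity)]
      have hsT : (s:ℝ) + 1 ≤ T := by exact_mod_cast hs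
      have : (0:ℝ) ≤ (s:ℝ) := Nat.cast_nonneg s
      rw [mul_comm (2:ℝ), mul_assoc, div_mul_eq_mul_div, le_div_iff₀ hTpos]
      push_cast
      nlinarith
    calc ((((s+1:ℕ):ℝ) + 1) / ((T:ℝ) + 1)) ^ lam
        ≤ (2 * (((s:ℝ) + 1) / (T:ℝ))) ^ lam :=
          Real.rpow_le_rpow (by positivity) hb1 (le_of_lt hlam0)
      _ = 2 ^ lam * (((s:ℝ) + 1) / (T:ℝ)) ^ lam :=
          Real.mul_rpow (by norm_num) (by positivity)
      _ ≤ 2 * (((s:ℝ) + 1) / (T:ℝ)) ^ lam := by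
          have h2 : (2:ℝ) ^ lam ≤ (2:ℝ) ^ (1:ℝ) :=
            Real.rpow_le_rpow_of_exponent_le (by norm_num) hlam1
          rw [Real.rpow_one] at h2
          exact mul_le_mul_of_nonneg_right h2 (Real.rpow_nonneg (by positivity) lam)
  refine hmain.trans ?_
  rw [Finset.mul_sum]
  apply add_le_add
  · exact mul_le_mul_of_nonneg_right hQ (hΔ 0 (Nat.zero_le T))
  · apply Finset.sum_le_sum
    intro s hs
    have hs' : s < T := Finset.mem_range.mp hs
    rw [← mul_assoc]
    exact mul_le_mul_of_nonneg_right (hR s hs') (hc s hs')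
end
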